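/- For every point x in P^1(R), the stabilizer of x in PSL_2(Z) is a cyclic group. -/

import Mathlib

open Classical in
/-- The Möbius action of a `2×2` real matrix on `ℝ ∪ {∞}` (encoded as
`Option ℝ`, with `none` playing the role of `∞`). -/
noncomputable def mobius (M : Matrix (Fin 2) (Fin 2) ℝ) : Option ℝ → Option ℝ
  | some x => if M 1 0 * x + M 1 1 = 0 then none
              else some ((M 0 0 * x + M 0 1) / (M 1 0 * x + M 1 1))
  | none => if M 1 0 = 0 then none else some (M 0 0 / M 1 0)

/-- The Möbius action of an element of `SL₂(ℤ)` on `P¹(ℝ) = ℝ ∪ {∞}`. -/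
noncomputable def mobiusSL (g : Matrix.SpecialLinearGroup (Fin 2) ℤ) :
    Option ℝ → Option ℝ :=
  mobius ((g : Matrix (Fin 2) (Fin 2) ℤ).map (Int.cast : ℤ → ℝ))

instance : Fact (Even (Fintype.card (Fin 2))) := ⟨by simp⟩

/-!
A rational point of `P¹(ℝ)` is `m • ∞` for some `m ∈ SL(2, ℤ)`, and the stabilizer of `∞`
consists of the matrices `±Tⁿ`. An element `g = [a, b; c, d]` fixes an irrational `r` exactly
when `(r, 1)` is an eigenvector of `g`; its eigenvalue `c r + d` is multiplicative on the
stabilizer and, as `r` is irrational, determines `g`. The eigenvalues of `g` and `g⁻¹` add up to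
the trace `a + d ∈ ℤ`, which keeps `|c r + d|` out of `(1, 2)`, so the logarithms of these
absolute values form a discrete, hence cyclic, subgroup of `ℝ`.
-/

open Matrix SpecialLinearGroup OnePoint
open scoped MatrixGroups

/-- For `G = SL(2, ℤ)` this says that the image of `H` in `PSL(2, ℤ)` is cyclic. -/
def IsCyclicUpToSign {G : Type*} [Group G] [HasDistribNeg G] (H : Subgroup G) : Prop :=
  ∃ g₀ ∈ H, ∀ g ∈ H, ∃ n : ℤ, g = g₀ ^ n ∨ g = -g₀ ^ n

lemma IsCyclicUpToSign.map {G G' : Type*} [Group G] [HasDistribNeg G] [Group G']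
    [HasDistribNeg G'] {H : Subgroup G} (hH : IsCyclicUpToSign H) (f : G →* G')
    (hf : ∀ g, f (-g) = -f g) : IsCyclicUpToSign (H.map f) := by
  obtain ⟨g₀, hg₀, hgen⟩ := hH
  refine ⟨f g₀, H.mem_map_of_mem f hg₀, ?_⟩
  rintro _ ⟨g, hg, rfl⟩
  obtain ⟨n, rfl | rfl⟩ := hgen g hg
  · exact ⟨n, Or.inl (map_zpow f g₀ n)⟩
  · exact ⟨n, Or.inr (by rw [hf, map_zpow])⟩

lemma not_add_inv_eq_intCast {t : ℝ} (h1 : 1 < |t|) (h2 : |t| < 2) (n : ℤ) :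
    t + t⁻¹ ≠ n := by
  intro h
  have ht : 0 < |t| := zero_lt_one.trans h1
  have habs : |t + t⁻¹| = |t| + |t|⁻¹ := by
    rcases lt_or_gt_of_ne (abs_pos.mp ht) with ht | ht
    · rw [abs_of_neg ht, abs_of_neg (add_neg ht (inv_lt_zero.mpr ht))]; ring
    · rw [abs_of_pos ht, abs_of_pos (add_pos ht (inv_pos.mpr ht))]
  have hlo : 2 < |t| + |t|⁻¹ := by nlinarith [inv_pos.mpr ht, mul_inv_cancel₀ ht.ne']
  have hhi : |t| + |t|⁻¹ < 3 := by linarith [inv_lt_one_of_one_lt₀ h1]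
  rw [h, ← Int.cast_abs] at habs
  have hn2 : (2 : ℤ) < |n| := by exact_mod_cast habs ▸ hlo
  have hn3 : |n| < (3 : ℤ) := by exact_mod_cast habs ▸ hhi
  omega

lemma isCyclicUpToSign_of_forall_add_inv_eq_intCast (H : Subgroup ℝˣ)
    (hH : ∀ u ∈ H, ∃ n : ℤ, (u : ℝ) + (u : ℝ)⁻¹ = n) : IsCyclicUpToSign H := by
  let L : AddSubgroup ℝ :=
    { carrier := (fun u : ℝˣ ↦ Real.log |(u : ℝ)|) '' H
      zero_mem' := ⟨1, H.one_mem, by simp⟩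
      add_mem' := by
        rintro _ _ ⟨u, hu, rfl⟩ ⟨v, hv, rfl⟩
        refine ⟨u * v, H.mul_mem hu hv, ?_⟩
        simp only [Units.val_mul, abs_mul]
        exact Real.log_mul (by simp) (by simp)
      neg_mem' := by
        rintro _ ⟨u, hu, rfl⟩
        exact ⟨u⁻¹, H.inv_mem hu, by simp [abs_inv]⟩ }
  have hdisc : Disjoint (L : Set ℝ) (Set.Ioo 0 (Real.log 2)) := by
    refine Set.disjoint_left.mpr ?_
    rintro _ ⟨u, hu, rfl⟩ ⟨h0, h2⟩
    have hu0 : 0 < |(u : ℝ)| := by simp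
    obtain ⟨n, hn⟩ := hH u hu
    exact not_add_inv_eq_intCast (Real.log_pos_iff hu0.le |>.mp h0)
      ((Real.log_lt_log_iff hu0 two_pos).mp h2) n hn
  obtain ⟨l₀, hL⟩ := AddSubgroup.cyclic_of_isolated_zero (Real.log_pos one_lt_two) hdisc
  obtain ⟨u₀, hu₀, hl₀⟩ : l₀ ∈ L := hL ▸ AddSubgroup.mem_closure_singleton_self l₀
  subst hl₀
  refine ⟨u₀, hu₀, fun u hu ↦ ?_⟩
  have hlog : Real.log |(u : ℝ)| ∈ L := ⟨u, hu, rfl⟩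
  rw [hL, AddSubgroup.mem_closure_singleton] at hlog
  obtain ⟨n, hn⟩ := hlog
  have habs : |(u : ℝ)| = |((u₀ ^ n : ℝˣ) : ℝ)| := by
    refine Real.log_injOn_pos (by simp) (by simp [zpow_pos]) ?_
    simp only [Units.val_zpow_eq_zpow_val, abs_zpow, Real.log_zpow]
    rw [← hn, zsmul_eq_mul]
  rcases abs_eq_abs.mp habs with h | h
  · exact ⟨n, Or.inl (Units.ext h)⟩
  · exact ⟨n, Or.inr (Units.ext h)⟩

lemma OnePoint.neg_smul_eq_smul {K : Type*} [Field K] [DecidableEq K] (g : GL (Fin 2) K)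
    (c : OnePoint K) : (-g) • c = g • c := by
  cases c with
  | infty => simp [smul_infty_eq_ite, neg_div_neg_eq]
  | coe c => simp [smul_some_eq_ite, ← neg_add_rev, add_comm, neg_div_neg_eq]

lemma mapGL_neg {n R S : Type*} [Fintype n] [DecidableEq n] [CommRing R] [CommRing S]
    [Algebra R S] [Fact (Even (Fintype.card n))] (g : SpecialLinearGroup n R) :
    mapGL S (-g) = -mapGL S g := by
  ext; simp [mapGL_coe_matrix]

@[simp] lemma mapGL_int_apply (g : SL(2, ℤ)) (i j : Fin 2) : mapGL ℝ g i j = (g i j : ℝ) := rfl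

noncomputable def stabilizerSL (c : OnePoint ℝ) : Subgroup SL(2, ℤ) :=
  (MulAction.stabilizer (GL (Fin 2) ℝ) c).comap (mapGL ℝ)

lemma mem_stabilizerSL {c : OnePoint ℝ} {g : SL(2, ℤ)} :
    g ∈ stabilizerSL c ↔ mapGL ℝ g • c = c := Iff.rfl

lemma neg_mem_stabilizerSL {c : OnePoint ℝ} {g : SL(2, ℤ)} (hg : g ∈ stabilizerSL c) :
    -g ∈ stabilizerSL c := by
  rwa [mem_stabilizerSL, mapGL_neg, OnePoint.neg_smul_eq_smul]

lemma mobiusSL_eq_smul (g : SL(2, ℤ)) (z : OnePoint ℝ) : mobiusSL g z = mapGL ℝ g • z := by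
  cases z with
  | infty =>
    simp only [mobiusSL, mobius, smul_infty_eq_ite, mapGL_int_apply, Matrix.map_apply]
    split_ifs <;> rfl
  | coe r =>
    simp only [mobiusSL, mobius, smul_some_eq_ite, mapGL_int_apply, Matrix.map_apply]
    split_ifs <;> rfl

lemma mem_stabilizerSL_infty {g : SL(2, ℤ)} : g ∈ stabilizerSL ∞ ↔ g 1 0 = 0 := by
  simp [mem_stabilizerSL, smul_infty_eq_self_iff]

open ModularGroup in
lemma eq_T_zpow_or_neg_of_apply_one_zero (g : SL(2, ℤ)) (hc : g 1 0 = 0) :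
    ∃ n : ℤ, g = T ^ n ∨ g = -T ^ n := by
  have had := g.det_coe
  rw [det_fin_two, hc, mul_zero, sub_zero] at had
  rcases Int.eq_one_or_neg_one_of_mul_eq_one' had with ⟨ha, hd⟩ | ⟨ha, hd⟩
  · refine ⟨g 0 1, Or.inl ?_⟩
    ext i j; fin_cases i <;> fin_cases j <;> simp [ha, hc, hd, coe_T_zpow]
  · refine ⟨-g 0 1, Or.inr ?_⟩
    ext i j; fin_cases i <;> fin_cases j <;> simp [ha, hc, hd, coe_T_zpow]

lemma isCyclicUpToSign_stabilizerSL_infty : IsCyclicUpToSign (stabilizerSL ∞) :=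
  ⟨ModularGroup.T, mem_stabilizerSL_infty.mpr (by simp [ModularGroup.T]),
    fun g hg ↦ eq_T_zpow_or_neg_of_apply_one_zero g (mem_stabilizerSL_infty.mp hg)⟩

lemma stabilizerSL_smul (m : SL(2, ℤ)) (c : OnePoint ℝ) :
    stabilizerSL (mapGL ℝ m • c) = (stabilizerSL c).map (MulAut.conj m).toMonoidHom := by
  ext g
  simp only [Subgroup.mem_map, mem_stabilizerSL, MulEquiv.coe_toMonoidHom, MulAut.conj_apply]
  constructor
  · intro hg
    refine ⟨m⁻¹ * g * m, ?_, by group⟩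
    simp [mul_smul, hg]
  · rintro ⟨h, hh, rfl⟩
    simp [mul_smul, hh]

lemma exists_smul_infty_eq_ratCast (q : ℚ) :
    ∃ m : SL(2, ℤ), mapGL ℝ m • ∞ = ((q : ℝ) : OnePoint ℝ) := by
  obtain ⟨m, hm0, hm1⟩ := q.isCoprime_num_den.exists_SL2_col 0
  exact ⟨m, by simp [smul_infty_eq_ite, hm0, hm1, Rat.cast_def]⟩

lemma Irrational.eq_zero_of_intCast_mul_add_eq_zero {r : ℝ} (hr : Irrational r) {a b : ℤ}
    (h : a * r + b = 0) : a = 0 ∧ b = 0 := by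
  obtain rfl : a = 0 := by
    by_contra ha
    exact ((hr.intCast_mul ha).add_intCast b).ne_zero h
  simpa using h

lemma mem_stabilizerSL_coe {r : ℝ} {g : SL(2, ℤ)} :
    g ∈ stabilizerSL r ↔ (g 0 0 : ℝ) * r + g 0 1 = r * (g 1 0 * r + g 1 1) := by
  rw [mem_stabilizerSL, ← GeneralLinearGroup.fixpointPolynomial_aeval_eq_zero_iff]
  simp only [GeneralLinearGroup.fixpointPolynomial, map_sub, map_add, map_mul, Polynomial.aeval_C,
    Polynomial.aeval_X_pow, Polynomial.aeval_X, Algebra.algebraMap_self_apply, mapGL_int_apply]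
  constructor <;> intro h <;> linear_combination -h

/-- The eigenvalue of `g` on its eigenvector `(r, 1)`. -/
noncomputable def multiplierHom (r : ℝ) : stabilizerSL r →* ℝˣ :=
  MonoidHom.toHomUnits
    { toFun g := ((g : SL(2, ℤ)) 1 0 : ℝ) * r + (g : SL(2, ℤ)) 1 1
      map_one' := by simp
      map_mul' g h := by
        have hh := mem_stabilizerSL_coe.mp h.2
        simp only [Subgroup.coe_mul, Matrix.SpecialLinearGroup.coe_mul, mul_apply,
          Fin.sum_univ_two, Int.cast_add, Int.cast_mul]
        linear_combination ((g : SL(2, ℤ)) 1 0 : ℝ) * hh }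

@[simp] lemma multiplierHom_apply (r : ℝ) (g : stabilizerSL r) :
    (multiplierHom r g : ℝ) = (g : SL(2, ℤ)) 1 0 * r + (g : SL(2, ℤ)) 1 1 := rfl

lemma multiplierHom_add_inv (r : ℝ) (g : stabilizerSL r) :
    (multiplierHom r g : ℝ) + (multiplierHom r g : ℝ)⁻¹ =
      ((g : SL(2, ℤ)) 0 0 + (g : SL(2, ℤ)) 1 1 : ℤ) := by
  rw [← Units.val_inv_eq_inv_val, ← map_inv, multiplierHom_apply, multiplierHom_apply]
  simp only [InvMemClass.coe_inv, SL2_inv_expl, cons_val', cons_val_zero, cons_val_fin_one,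
    cons_val_one, Int.cast_neg, Int.cast_add]
  ring

lemma multiplierHom_neg {r : ℝ} (g : stabilizerSL r) :
    multiplierHom r ⟨-g, neg_mem_stabilizerSL g.2⟩ = -multiplierHom r g := by
  ext
  simp only [multiplierHom_apply, coe_neg, Matrix.neg_apply, Int.cast_neg, Units.val_neg]
  ring

lemma multiplierHom_injective {r : ℝ} (hr : Irrational r) :
    Function.Injective (multiplierHom r) := by
  refine (injective_iff_map_eq_one _).mpr fun g hg ↦ ?_
  have hfix := mem_stabilizerSL_coe.mp g.2
  have hcd : ((g : SL(2, ℤ)) 1 0 : ℝ) * r + ((g : SL(2, ℤ)) 1 1 - 1 : ℤ) = 0 := by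
    have h1 := congrArg Units.val hg
    rw [multiplierHom_apply, Units.val_one] at h1
    push_cast; linear_combination h1
  obtain ⟨hc, hd⟩ := hr.eq_zero_of_intCast_mul_add_eq_zero hcd
  have hab : (((g : SL(2, ℤ)) 0 0 - 1 : ℤ) : ℝ) * r + ((g : SL(2, ℤ)) 0 1 : ℤ) = 0 := by
    rw [hc, sub_eq_zero.mp hd] at hfix; push_cast at hfix ⊢; linear_combination hfix
  obtain ⟨ha, hb⟩ := hr.eq_zero_of_intCast_mul_add_eq_zero hab
  rw [sub_eq_zero] at ha hd
  ext i j
  fin_cases i <;> fin_cases j <;> simp [ha, hb, hc, hd]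

lemma isCyclicUpToSign_stabilizerSL_of_irrational {r : ℝ} (hr : Irrational r) :
    IsCyclicUpToSign (stabilizerSL r) := by
  obtain ⟨_, ⟨g₀, rfl⟩, hgen⟩ := isCyclicUpToSign_of_forall_add_inv_eq_intCast
    (multiplierHom r).range (by rintro _ ⟨g, rfl⟩; exact ⟨_, multiplierHom_add_inv r g⟩)
  refine ⟨g₀, g₀.2, fun g hg ↦ ?_⟩
  obtain ⟨n, hn | hn⟩ := hgen (multiplierHom r ⟨g, hg⟩) ⟨_, rfl⟩
  · rw [← map_zpow] at hn
    exact ⟨n, Or.inl (congrArg Subtype.val (multiplierHom_injective hr hn))⟩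
  · rw [← map_zpow, ← multiplierHom_neg] at hn
    exact ⟨n, Or.inr (congrArg Subtype.val (multiplierHom_injective hr hn))⟩

lemma isCyclicUpToSign_stabilizerSL (c : OnePoint ℝ) : IsCyclicUpToSign (stabilizerSL c) := by
  cases c with
  | infty => exact isCyclicUpToSign_stabilizerSL_infty
  | coe r =>
    by_cases hr : Irrational r
    · exact isCyclicUpToSign_stabilizerSL_of_irrational hr
    · obtain ⟨q, rfl⟩ := not_not.mp hr
      obtain ⟨m, hm⟩ := exists_smul_infty_eq_ratCast q
      rw [← hm, stabilizerSL_smul]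
      exact isCyclicUpToSign_stabilizerSL_infty.map _ fun g ↦ by simp [MulAut.conj_apply]

/-- For every point `x ∈ P¹(ℝ)`, the stabilizer of `x` in
`PSL₂(ℤ)` is cyclic: there is `g₀ ∈ SL₂(ℤ)` fixing `x` such that every
`g ∈ SL₂(ℤ)` fixing `x` is, up to sign (i.e. in `PSL₂(ℤ)`), an integer power
of `g₀`. -/
theorem psl2z_stabilizer_cyclic (x : Option ℝ) :
    ∃ g₀ : Matrix.SpecialLinearGroup (Fin 2) ℤ, mobiusSL g₀ x = x ∧
      ∀ g : Matrix.SpecialLinearGroup (Fin 2) ℤ, mobiusSL g x = x →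
        ∃ n : ℤ, g = g₀ ^ n ∨ g = -(g₀ ^ n) := by
  obtain ⟨g₀, hg₀, hgen⟩ := isCyclicUpToSign_stabilizerSL x
  refine ⟨g₀, (mobiusSL_eq_smul g₀ x).trans (mem_stabilizerSL.mp hg₀), fun g hg ↦ ?_⟩
  exact hgen g (mem_stabilizerSL.mpr ((mobiusSL_eq_smul g x).symm.trans hg))
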